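/- arXiv:2105.01424 — 7 statements merged into one kernel-verified Lean document; each statement's English description precedes it below -/
import Mathlib

section
/- Performance difference lemma: for any two policies π₁, π₂ and any initial distribution μ, V^{π₁}(μ) − V^{π₂}(μ) = (1/(1−γ)) ∑_{s,a} d^{π₁}_μ(s) π₁(a|s) A^{π₂}(s,a). -/
open Finset

/-- Distribution over states after `t` steps, starting from initial distribution `μ`. -/
noncomputable def stateDist {S A : Type*} [Fintype S] [Fintype A]
    (P : S → A → S → ℝ) (pol : S → A → ℝ) (μ : S → ℝ) : ℕ → S → ℝ
  | 0 => μ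
  | t + 1 => fun s' => ∑ s : S, ∑ a : A, stateDist P pol μ t s * pol s a * P s a s'

/-- The discounted value of a policy starting from initial state distribution `μ`:
`V^π(μ) = E_{s∼μ}[V^π(s)]`. -/
noncomputable def valueDist {S A : Type*} [Fintype S] [Fintype A]
    (R : S → A → ℝ) (P : S → A → S → ℝ) (pol : S → A → ℝ) (γ : ℝ) (μ : S → ℝ) : ℝ :=
  ∑' t : ℕ, γ ^ t * ∑ s : S, ∑ a : A, stateDist P pol μ t s * pol s a * R s a

/-- The value function `V^π(s)`. -/
noncomputable def valueFn {S A : Type*} [Fintype S] [Fintype A] [DecidableEq S]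
    (R : S → A → ℝ) (P : S → A → S → ℝ) (pol : S → A → ℝ) (γ : ℝ) (s : S) : ℝ :=
  valueDist R P pol γ (fun s' => if s' = s then 1 else 0)

/-- The Q-function: `Q^π(s,a) = E[∑ γ^t R | S_0 = s, A_0 = a]`. -/
noncomputable def qFn {S A : Type*} [Fintype S] [Fintype A]
    (R : S → A → ℝ) (P : S → A → S → ℝ) (pol : S → A → ℝ) (γ : ℝ) (s : S) (a : A) : ℝ :=
  R s a + γ * valueDist R P pol γ (P s a)

/-- The advantage function `A^π(s,a) = Q^π(s,a) − V^π(s)`. -/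
noncomputable def advFn {S A : Type*} [Fintype S] [Fintype A] [DecidableEq S]
    (R : S → A → ℝ) (P : S → A → S → ℝ) (pol : S → A → ℝ) (γ : ℝ) (s : S) (a : A) : ℝ :=
  qFn R P pol γ s a - valueFn R P pol γ s

/-- The discounted state visitation distribution
`d^π_μ(s) = (1−γ) ∑_{t≥0} γ^t P(S_t = s | S_0 ∼ μ)`. -/
noncomputable def visitDist {S A : Type*} [Fintype S] [Fintype A]
    (P : S → A → S → ℝ) (pol : S → A → ℝ) (γ : ℝ) (μ : S → ℝ) (s : S) : ℝ :=
  (1 - γ) * ∑' t : ℕ, γ ^ t * stateDist P pol μ t s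

section Helpers
variable {S A : Type*} [Fintype S] [Fintype A]

lemma stateDist_nonneg (P : S → A → S → ℝ) (pol : S → A → ℝ) (μ : S → ℝ)
    (hP0 : ∀ s a s', 0 ≤ P s a s') (hpol0 : ∀ s a, 0 ≤ pol s a) (hμ0 : ∀ s, 0 ≤ μ s) :
    ∀ t s, 0 ≤ stateDist P pol μ t s := by
  intro t
  induction t with
  | zero => exact hμ0
  | succ t ih =>
    intro s'
    exact Finset.sum_nonneg fun s _ => Finset.sum_nonneg fun a _ =>
      mul_nonneg (mul_nonneg (ih s) (hpol0 s a)) (hP0 s a s')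

lemma stateDist_sum (P : S → A → S → ℝ) (pol : S → A → ℝ) (μ : S → ℝ)
    (hP1 : ∀ s a, ∑ s', P s a s' = 1) (hpol1 : ∀ s, ∑ a, pol s a = 1)
    (hμ1 : ∑ s, μ s = 1) :
    ∀ t, ∑ s, stateDist P pol μ t s = 1 := by
  intro t
  induction t with
  | zero => exact hμ1
  | succ t ih =>
    show ∑ s' : S, ∑ s : S, ∑ a : A, stateDist P pol μ t s * pol s a * P s a s' = 1
    rw [Finset.sum_comm]
    calc ∑ s : S, ∑ s' : S, ∑ a : A, stateDist P pol μ t s * pol s a * P s a s'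
        = ∑ s : S, stateDist P pol μ t s := by
          refine Finset.sum_congr rfl fun s _ => ?_
          rw [Finset.sum_comm]
          calc ∑ a : A, ∑ s' : S, stateDist P pol μ t s * pol s a * P s a s'
              = ∑ a : A, stateDist P pol μ t s * pol s a := by
                refine Finset.sum_congr rfl fun a _ => ?_
                rw [← Finset.mul_sum, hP1 s a, mul_one]
            _ = stateDist P pol μ t s := by rw [← Finset.mul_sum, hpol1 s, mul_one]
      _ = 1 := ih

lemma stateDist_le_one (P : S → A → S → ℝ) (pol : S → A → ℝ) (μ : S → ℝ)
    (hP0 : ∀ s a s', 0 ≤ P s a s') (hP1 : ∀ s a, ∑ s', P s a s' = 1)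
    (hpol0 : ∀ s a, 0 ≤ pol s a) (hpol1 : ∀ s, ∑ a, pol s a = 1)
    (hμ0 : ∀ s, 0 ≤ μ s) (hμ1 : ∑ s, μ s = 1) :
    ∀ t s, stateDist P pol μ t s ≤ 1 := by
  intro t s
  calc stateDist P pol μ t s ≤ ∑ s', stateDist P pol μ t s' :=
        Finset.single_le_sum (fun s' _ => stateDist_nonneg P pol μ hP0 hpol0 hμ0 t s')
          (Finset.mem_univ s)
    _ = 1 := stateDist_sum P pol μ hP1 hpol1 hμ1 t

lemma stateDist_linear [DecidableEq S] (P : S → A → S → ℝ) (pol : S → A → ℝ) (μ : S → ℝ) :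
    ∀ t s, stateDist P pol μ t s
      = ∑ s₀, μ s₀ * stateDist P pol (fun s' => if s' = s₀ then 1 else 0) t s := by
  intro t
  induction t with
  | zero =>
    intro s
    show μ s = ∑ s₀, μ s₀ * if s = s₀ then 1 else 0
    simp [mul_ite]
  | succ t ih =>
    intro s'
    show ∑ s : S, ∑ a : A, stateDist P pol μ t s * pol s a * P s a s' = _
    simp only [ih]
    show _ = ∑ s₀, μ s₀ * ∑ s : S, ∑ a : A,
        stateDist P pol (fun s'' => if s'' = s₀ then 1 else 0) t s * pol s a * P s a s'
    calc ∑ s : S, ∑ a : A,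
          (∑ s₀, μ s₀ * stateDist P pol (fun s'' => if s'' = s₀ then 1 else 0) t s)
            * pol s a * P s a s'
        = ∑ s : S, ∑ s₀, ∑ a : A, μ s₀ *
            (stateDist P pol (fun s'' => if s'' = s₀ then 1 else 0) t s * pol s a * P s a s') := by
          refine Finset.sum_congr rfl fun s _ => ?_
          rw [Finset.sum_comm]
          refine Finset.sum_congr rfl fun a _ => ?_
          rw [Finset.sum_mul, Finset.sum_mul]
          exact Finset.sum_congr rfl fun s₀ _ => by ring
      _ = ∑ s₀, μ s₀ * ∑ s : S, ∑ a : A,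
            stateDist P pol (fun s'' => if s'' = s₀ then 1 else 0) t s * pol s a * P s a s' := by
          rw [Finset.sum_comm]
          refine Finset.sum_congr rfl fun s₀ _ => ?_
          rw [Finset.mul_sum]
          exact Finset.sum_congr rfl fun s _ => by rw [Finset.mul_sum]
end Helpers

section Helpers2
variable {S A : Type*} [Fintype S] [Fintype A]

lemma weighted_abs_le {ι : Type*} [Fintype ι] (ν : ι → ℝ) (c : ι → ℝ) (C : ℝ) (hC : 0 ≤ C)
    (hν0 : ∀ i, 0 ≤ ν i) (hν1 : ∑ i, ν i = 1) (hc : ∀ i, |c i| ≤ C) :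
    |∑ i, ν i * c i| ≤ C := by
  calc |∑ i, ν i * c i| ≤ ∑ i, |ν i * c i| := Finset.abs_sum_le_sum_abs _ _
    _ = ∑ i, ν i * |c i| := by
        refine Finset.sum_congr rfl fun i _ => ?_
        rw [abs_mul, abs_of_nonneg (hν0 i)]
    _ ≤ ∑ i, ν i * C := Finset.sum_le_sum fun i _ => mul_le_mul_of_nonneg_left (hc i) (hν0 i)
    _ = C := by rw [← Finset.sum_mul, hν1, one_mul]

lemma summable_geom_bound {γ : ℝ} (hγ0 : 0 ≤ γ) (hγ1 : γ < 1) (C : ℝ) (f : ℕ → ℝ)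
    (hf : ∀ t, |f t| ≤ C * γ ^ t) : Summable f := by
  refine Summable.of_norm_bounded ((summable_geometric_of_lt_one hγ0 hγ1).mul_left C) ?_
  simpa using hf

/-- The double weighted sum ∑ s ∑ a, ν s * pol s a * c s a is bounded by C. -/
lemma double_weighted_abs_le (pol : S → A → ℝ) (ν : S → ℝ) (c : S → A → ℝ) (C : ℝ) (hC : 0 ≤ C)
    (hν0 : ∀ s, 0 ≤ ν s) (hν1 : ∑ s, ν s = 1)
    (hpol0 : ∀ s a, 0 ≤ pol s a) (hpol1 : ∀ s, ∑ a, pol s a = 1)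
    (hc : ∀ s a, |c s a| ≤ C) :
    |∑ s, ∑ a, ν s * pol s a * c s a| ≤ C := by
  have h : ∀ s, ∑ a, ν s * pol s a * c s a = ν s * ∑ a, pol s a * c s a := by
    intro s; rw [Finset.mul_sum]; exact Finset.sum_congr rfl fun a _ => by ring
  simp only [h]
  exact weighted_abs_le ν _ C hC hν0 hν1 fun s =>
    weighted_abs_le (pol s) (c s) C hC (hpol0 s) (hpol1 s) (hc s)

variable (R : S → A → ℝ) (P : S → A → S → ℝ) (pol : S → A → ℝ) (γ : ℝ) (μ : S → ℝ)
variable (hγ0 : 0 ≤ γ) (hγ1 : γ < 1)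
    (hR : ∀ s a, R s a ∈ Set.Icc (0 : ℝ) 1)
    (hP0 : ∀ s a s', 0 ≤ P s a s') (hP1 : ∀ s a, ∑ s', P s a s' = 1)
    (hpol0 : ∀ s a, 0 ≤ pol s a) (hpol1 : ∀ s, ∑ a, pol s a = 1)
    (hμ0 : ∀ s, 0 ≤ μ s) (hμ1 : ∑ s, μ s = 1)

include hγ0 hγ1 hR hP0 hP1 hpol0 hpol1 hμ0 hμ1 in
lemma valueDist_summable :
    Summable (fun t => γ ^ t * ∑ s : S, ∑ a : A, stateDist P pol μ t s * pol s a * R s a) := by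
  refine summable_geom_bound hγ0 hγ1 1 _ fun t => ?_
  rw [abs_mul, abs_pow, abs_of_nonneg hγ0, one_mul]
  have hb : |∑ s : S, ∑ a : A, stateDist P pol μ t s * pol s a * R s a| ≤ 1 :=
    double_weighted_abs_le pol _ R 1 zero_le_one
      (stateDist_nonneg P pol μ hP0 hpol0 hμ0 t)
      (stateDist_sum P pol μ hP1 hpol1 hμ1 t) hpol0 hpol1
      (fun s a => abs_le.2 ⟨by linarith [(hR s a).1], (hR s a).2⟩)
  calc γ ^ t * |∑ s : S, ∑ a : A, stateDist P pol μ t s * pol s a * R s a|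
      ≤ γ ^ t * 1 := mul_le_mul_of_nonneg_left hb (pow_nonneg hγ0 t)
    _ = γ ^ t := by ring

lemma triple_swap (d : S → S → ℝ) (c : S → A → ℝ) :
    ∑ s : S, ∑ a : A, (∑ s₀, μ s₀ * d s₀ s) * pol s a * c s a
      = ∑ s₀, μ s₀ * ∑ s : S, ∑ a : A, d s₀ s * pol s a * c s a := by
  calc ∑ s : S, ∑ a : A, (∑ s₀, μ s₀ * d s₀ s) * pol s a * c s a
      = ∑ s : S, ∑ s₀, ∑ a : A, μ s₀ * (d s₀ s * pol s a * c s a) := by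
        refine Finset.sum_congr rfl fun s _ => ?_
        rw [Finset.sum_comm]
        refine Finset.sum_congr rfl fun a _ => ?_
        rw [Finset.sum_mul, Finset.sum_mul]
        exact Finset.sum_congr rfl fun s₀ _ => by ring
    _ = ∑ s₀, μ s₀ * ∑ s : S, ∑ a : A, d s₀ s * pol s a * c s a := by
        rw [Finset.sum_comm]
        refine Finset.sum_congr rfl fun s₀ _ => ?_
        rw [Finset.mul_sum]
        exact Finset.sum_congr rfl fun s _ => by rw [Finset.mul_sum]

include hγ0 hγ1 hR hP0 hP1 hpol0 hpol1 hμ0 hμ1 in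
lemma valueDist_eq_sum [DecidableEq S] :
    valueDist R P pol γ μ = ∑ s₀, μ s₀ * valueFn R P pol γ s₀ := by
  have hδ0 : ∀ s₀ : S, ∀ s' : S, (0:ℝ) ≤ if s' = s₀ then 1 else 0 := by
    intro s₀ s'; split <;> norm_num
  have hδ1 : ∀ s₀ : S, (∑ s' : S, if s' = s₀ then (1:ℝ) else 0) = 1 := by
    intro s₀; simp
  have hsum : ∀ s₀ : S, Summable (fun t => γ ^ t * ∑ s : S, ∑ a : A,
      stateDist P pol (fun s' => if s' = s₀ then 1 else 0) t s * pol s a * R s a) :=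
    fun s₀ => valueDist_summable R P pol γ _ hγ0 hγ1 hR hP0 hP1 hpol0 hpol1 (hδ0 s₀) (hδ1 s₀)
  have key : ∀ t, γ ^ t * ∑ s : S, ∑ a : A, stateDist P pol μ t s * pol s a * R s a
      = ∑ s₀, μ s₀ * (γ ^ t * ∑ s : S, ∑ a : A,
          stateDist P pol (fun s' => if s' = s₀ then 1 else 0) t s * pol s a * R s a) := by
    intro t
    have h1 : ∑ s : S, ∑ a : A, stateDist P pol μ t s * pol s a * R s a
        = ∑ s₀, μ s₀ * ∑ s : S, ∑ a : A,
            stateDist P pol (fun s' => if s' = s₀ then 1 else 0) t s * pol s a * R s a := by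
      rw [← triple_swap pol μ]
      refine Finset.sum_congr rfl fun s _ => Finset.sum_congr rfl fun a _ => ?_
      rw [← stateDist_linear P pol μ t s]
    rw [h1, Finset.mul_sum]
    exact Finset.sum_congr rfl fun s₀ _ => by ring
  calc valueDist R P pol γ μ
      = ∑' t, ∑ s₀, μ s₀ * (γ ^ t * ∑ s : S, ∑ a : A,
          stateDist P pol (fun s' => if s' = s₀ then 1 else 0) t s * pol s a * R s a) := by
        unfold valueDist; exact tsum_congr key
    _ = ∑ s₀, ∑' t, μ s₀ * (γ ^ t * ∑ s : S, ∑ a : A,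
          stateDist P pol (fun s' => if s' = s₀ then 1 else 0) t s * pol s a * R s a) :=
        Summable.tsum_finsetSum fun s₀ _ => (hsum s₀).mul_left (μ s₀)
    _ = ∑ s₀, μ s₀ * valueFn R P pol γ s₀ := by
        refine Finset.sum_congr rfl fun s₀ _ => ?_
        rw [tsum_mul_left]; rfl

include hγ0 hR hP0 hpol0 hμ0 in
lemma valueDist_nonneg : 0 ≤ valueDist R P pol γ μ := by
  refine tsum_nonneg fun t => mul_nonneg (pow_nonneg hγ0 t) ?_
  exact Finset.sum_nonneg fun s _ => Finset.sum_nonneg fun a _ =>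
    mul_nonneg (mul_nonneg (stateDist_nonneg P pol μ hP0 hpol0 hμ0 t s) (hpol0 s a)) (hR s a).1

include hγ0 hγ1 hR hP0 hP1 hpol0 hpol1 hμ0 hμ1 in
lemma valueDist_le : valueDist R P pol γ μ ≤ (1 - γ)⁻¹ := by
  have h := Summable.tsum_le_tsum (f := fun t => γ ^ t * ∑ s : S, ∑ a : A,
      stateDist P pol μ t s * pol s a * R s a) (g := fun t => γ ^ t) ?_
      (valueDist_summable R P pol γ μ hγ0 hγ1 hR hP0 hP1 hpol0 hpol1 hμ0 hμ1)
      (summable_geometric_of_lt_one hγ0 hγ1)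
  · rw [tsum_geometric_of_lt_one hγ0 hγ1] at h; exact h
  · intro t
    have hb : |∑ s : S, ∑ a : A, stateDist P pol μ t s * pol s a * R s a| ≤ 1 :=
      double_weighted_abs_le pol _ R 1 zero_le_one
        (stateDist_nonneg P pol μ hP0 hpol0 hμ0 t)
        (stateDist_sum P pol μ hP1 hpol1 hμ1 t) hpol0 hpol1
        (fun s a => abs_le.2 ⟨by linarith [(hR s a).1], (hR s a).2⟩)
    calc γ ^ t * ∑ s : S, ∑ a : A, stateDist P pol μ t s * pol s a * R s a
        ≤ γ ^ t * 1 := mul_le_mul_of_nonneg_left (le_trans (le_abs_self _) hb) (pow_nonneg hγ0 t)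
      _ = γ ^ t := mul_one _

include hγ0 hγ1 hR hP0 hP1 hpol0 hpol1 in
lemma valueFn_abs_le [DecidableEq S] (s : S) : |valueFn R P pol γ s| ≤ (1 - γ)⁻¹ := by
  have hδ0 : ∀ s' : S, (0:ℝ) ≤ if s' = s then 1 else 0 := by intro s'; split <;> norm_num
  have hδ1 : (∑ s' : S, if s' = s then (1:ℝ) else 0) = 1 := by simp
  unfold valueFn
  rw [abs_of_nonneg (valueDist_nonneg R P pol γ _ hγ0 hR hP0 hpol0 hδ0)]
  exact valueDist_le R P pol γ _ hγ0 hγ1 hR hP0 hP1 hpol0 hpol1 hδ0 hδ1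
end Helpers2

/-- Performance difference lemma: for any two policies `π₁, π₂` and any initial distribution `μ`,
`V^{π₁}(μ) − V^{π₂}(μ) = (1/(1−γ)) ∑_{s,a} d^{π₁}_μ(s) π₁(a|s) A^{π₂}(s,a)`. -/
theorem performance_difference_lemma {S A : Type*} [Fintype S] [Fintype A] [DecidableEq S]
    [Nonempty S] [Nonempty A]
    (R : S → A → ℝ) (P : S → A → S → ℝ) (pol₁ pol₂ : S → A → ℝ) (γ : ℝ) (μ : S → ℝ)
    (hγ : γ ∈ Set.Ioo (0 : ℝ) 1)
    (hR : ∀ s a, R s a ∈ Set.Icc (0 : ℝ) 1)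
    (hP0 : ∀ s a s', 0 ≤ P s a s') (hP1 : ∀ s a, ∑ s', P s a s' = 1)
    (hpol₁0 : ∀ s a, 0 ≤ pol₁ s a) (hpol₁1 : ∀ s, ∑ a, pol₁ s a = 1)
    (hpol₂0 : ∀ s a, 0 ≤ pol₂ s a) (hpol₂1 : ∀ s, ∑ a, pol₂ s a = 1)
    (hμ0 : ∀ s, 0 ≤ μ s) (hμ1 : ∑ s, μ s = 1) :
    valueDist R P pol₁ γ μ - valueDist R P pol₂ γ μ =
      (1 / (1 - γ)) *
        ∑ s : S, ∑ a : A, visitDist P pol₁ γ μ s * pol₁ s a * advFn R P pol₂ γ s a := by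
  obtain ⟨hγ0', hγ1⟩ := hγ
  have hγ0 : (0:ℝ) ≤ γ := hγ0'.le
  have hγne : (1:ℝ) - γ ≠ 0 := by linarith
  have hinv0 : (0:ℝ) ≤ (1 - γ)⁻¹ := by
    have h : (0:ℝ) < 1 - γ := by linarith
    positivity
  set d := stateDist P pol₁ μ with hd
  set V2 := valueFn R P pol₂ γ with hV2def
  set adv := advFn R P pol₂ γ with hadvdef
  have hd0 : ∀ t s, 0 ≤ d t s := stateDist_nonneg P pol₁ μ hP0 hpol₁0 hμ0
  have hd1 : ∀ t, ∑ s, d t s = 1 := stateDist_sum P pol₁ μ hP1 hpol₁1 hμ1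
  have hdle : ∀ t s, d t s ≤ 1 := stateDist_le_one P pol₁ μ hP0 hP1 hpol₁0 hpol₁1 hμ0 hμ1
  have hV2b : ∀ s, |V2 s| ≤ (1 - γ)⁻¹ :=
    fun s => valueFn_abs_le R P pol₂ γ hγ0 hγ1 hR hP0 hP1 hpol₂0 hpol₂1 s
  -- advantage expansion
  have hadv : ∀ s a, adv s a = R s a + γ * (∑ s', P s a s' * V2 s') - V2 s := by
    intro s a
    rw [hadvdef]
    unfold advFn qFn
    rw [valueDist_eq_sum R P pol₂ γ (P s a) hγ0 hγ1 hR hP0 hP1 hpol₂0 hpol₂1 (hP0 s a) (hP1 s a)]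
  -- advantage bound
  set C : ℝ := 1 + 2 * (1 - γ)⁻¹ with hCdef
  have hC0 : (0:ℝ) ≤ C := by rw [hCdef]; linarith
  have hadvb : ∀ s a, |adv s a| ≤ C := by
    intro s a
    have h2 : |valueDist R P pol₂ γ (P s a)| ≤ (1 - γ)⁻¹ := by
      rw [abs_of_nonneg (valueDist_nonneg R P pol₂ γ _ hγ0 hR hP0 hpol₂0 (hP0 s a))]
      exact valueDist_le R P pol₂ γ _ hγ0 hγ1 hR hP0 hP1 hpol₂0 hpol₂1 (hP0 s a) (hP1 s a)
    have h3 : |V2 s| ≤ (1 - γ)⁻¹ := hV2b s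
    rw [hadvdef]
    unfold advFn qFn
    have habs : |R s a + γ * valueDist R P pol₂ γ (P s a) - valueFn R P pol₂ γ s|
        ≤ |R s a| + |γ * valueDist R P pol₂ γ (P s a)| + |valueFn R P pol₂ γ s| := by
      calc |R s a + γ * valueDist R P pol₂ γ (P s a) - valueFn R P pol₂ γ s|
          ≤ |R s a + γ * valueDist R P pol₂ γ (P s a)| + |valueFn R P pol₂ γ s| :=
            abs_sub _ _
        _ ≤ |R s a| + |γ * valueDist R P pol₂ γ (P s a)| + |valueFn R P pol₂ γ s| :=
            add_le_add_left (abs_add_le _ _) _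
    have h1 : |R s a| ≤ 1 := abs_le.2 ⟨by linarith [(hR s a).1], (hR s a).2⟩
    have h4 : |γ * valueDist R P pol₂ γ (P s a)| ≤ (1 - γ)⁻¹ := by
      rw [abs_mul, abs_of_nonneg hγ0]
      calc γ * |valueDist R P pol₂ γ (P s a)| ≤ 1 * (1 - γ)⁻¹ :=
            mul_le_mul hγ1.le h2 (abs_nonneg _) zero_le_one
        _ = (1 - γ)⁻¹ := one_mul _
    have h3' : |valueFn R P pol₂ γ s| ≤ (1 - γ)⁻¹ := h3
    rw [hCdef]
    linarith
  -- key functions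
  set g : ℕ → ℝ := fun t => γ ^ t * ∑ s, d t s * V2 s with hgdef
  set rterm : ℕ → ℝ := fun t => γ ^ t * ∑ s, ∑ a, d t s * pol₁ s a * R s a with hrdef
  set aterm : ℕ → ℝ := fun t => γ ^ t * ∑ s, ∑ a, d t s * pol₁ s a * adv s a with hadef
  -- per-step identity
  have hmid : ∀ t, ∑ s, ∑ a, d t s * pol₁ s a * (γ * ∑ s', P s a s' * V2 s')
      = γ * ∑ s', d (t + 1) s' * V2 s' := by
    intro t
    have e : ∀ s a, d t s * pol₁ s a * (γ * ∑ s', P s a s' * V2 s')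
        = γ * ∑ s', (d t s * pol₁ s a * P s a s') * V2 s' := by
      intro s a
      rw [Finset.mul_sum, Finset.mul_sum, Finset.mul_sum]
      exact Finset.sum_congr rfl fun s' _ => by ring
    simp only [e, ← Finset.mul_sum]
    congr 1
    calc ∑ s, ∑ a, ∑ s', (d t s * pol₁ s a * P s a s') * V2 s'
        = ∑ s, ∑ s', ∑ a, (d t s * pol₁ s a * P s a s') * V2 s' :=
          Finset.sum_congr rfl fun s _ => Finset.sum_comm
      _ = ∑ s', ∑ s, ∑ a, (d t s * pol₁ s a * P s a s') * V2 s' := Finset.sum_comm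
      _ = ∑ s', (∑ s, ∑ a, d t s * pol₁ s a * P s a s') * V2 s' := by
          refine Finset.sum_congr rfl fun s' _ => ?_
          rw [Finset.sum_mul]
          exact Finset.sum_congr rfl fun s _ => by rw [Finset.sum_mul]
      _ = ∑ s', d (t + 1) s' * V2 s' := rfl
  have hlast : ∀ t, ∑ s, ∑ a, d t s * pol₁ s a * V2 s = ∑ s, d t s * V2 s := by
    intro t
    refine Finset.sum_congr rfl fun s _ => ?_
    calc ∑ a, d t s * pol₁ s a * V2 s = (d t s * V2 s) * ∑ a, pol₁ s a := by
          rw [Finset.mul_sum]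
          exact Finset.sum_congr rfl fun a _ => by ring
      _ = d t s * V2 s := by rw [hpol₁1 s, mul_one]
  have hstep : ∀ t, aterm t = rterm t + (g (t + 1) - g t) := by
    intro t
    have split : ∑ s, ∑ a, d t s * pol₁ s a * adv s a
        = (∑ s, ∑ a, d t s * pol₁ s a * R s a) + γ * (∑ s', d (t + 1) s' * V2 s')
          - ∑ s, d t s * V2 s := by
      have e : ∀ s a, d t s * pol₁ s a * adv s a
          = d t s * pol₁ s a * R s a + d t s * pol₁ s a * (γ * ∑ s', P s a s' * V2 s')
            - d t s * pol₁ s a * V2 s := by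
        intro s a; rw [hadv s a]; ring
      simp only [e, Finset.sum_add_distrib, Finset.sum_sub_distrib, hmid t, hlast t]
    rw [hadef, hrdef, hgdef]
    simp only
    rw [split]
    rw [pow_succ]
    ring
  -- summability
  have hsum_r : Summable rterm :=
    valueDist_summable R P pol₁ γ μ hγ0 hγ1 hR hP0 hP1 hpol₁0 hpol₁1 hμ0 hμ1
  have hsum_g : Summable g := by
    refine summable_geom_bound hγ0 hγ1 (1 - γ)⁻¹ g fun t => ?_
    rw [hgdef]
    simp only
    rw [abs_mul, abs_pow, abs_of_nonneg hγ0, mul_comm ((1-γ)⁻¹) (γ ^ t)]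
    exact mul_le_mul_of_nonneg_left
      (weighted_abs_le (d t) V2 (1 - γ)⁻¹ hinv0 (hd0 t) (hd1 t) hV2b) (pow_nonneg hγ0 t)
  have hsum_a : Summable aterm := by
    refine summable_geom_bound hγ0 hγ1 C aterm fun t => ?_
    rw [hadef]
    simp only
    rw [abs_mul, abs_pow, abs_of_nonneg hγ0, mul_comm C (γ ^ t)]
    exact mul_le_mul_of_nonneg_left
      (double_weighted_abs_le pol₁ (d t) adv C hC0 (hd0 t) (hd1 t) hpol₁0 hpol₁1 hadvb)
      (pow_nonneg hγ0 t)
  have hsum_g1 : Summable (fun t => g (t + 1)) := (summable_nat_add_iff 1).2 hsum_g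
  have hsum_tel : Summable (fun t => g (t + 1) - g t) := hsum_g1.sub hsum_g
  -- telescoping
  have htel : ∑' t, (g (t + 1) - g t) = -g 0 := by
    rw [Summable.tsum_sub hsum_g1 hsum_g]
    have h0 : ∑' t, g t = g 0 + ∑' t, g (t + 1) := Summable.tsum_eq_zero_add hsum_g
    linarith
  have hg0 : g 0 = valueDist R P pol₂ γ μ := by
    rw [hgdef]
    simp only [pow_zero, one_mul]
    exact (valueDist_eq_sum R P pol₂ γ μ hγ0 hγ1 hR hP0 hP1 hpol₂0 hpol₂1 hμ0 hμ1).symm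
  have hrt : ∑' t, rterm t = valueDist R P pol₁ γ μ := rfl
  have hLHS : ∑' t, aterm t = valueDist R P pol₁ γ μ - valueDist R P pol₂ γ μ := by
    calc ∑' t, aterm t = ∑' t, (rterm t + (g (t + 1) - g t)) := tsum_congr hstep
      _ = (∑' t, rterm t) + ∑' t, (g (t + 1) - g t) := Summable.tsum_add hsum_r hsum_tel
      _ = valueDist R P pol₁ γ μ + -g 0 := by rw [hrt, htel]
      _ = valueDist R P pol₁ γ μ - valueDist R P pol₂ γ μ := by rw [hg0]; ring
  -- right-hand side
  have hsum_td : ∀ s, Summable (fun t => γ ^ t * d t s) := by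
    intro s
    refine summable_geom_bound hγ0 hγ1 1 _ fun t => ?_
    rw [abs_mul, abs_pow, abs_of_nonneg hγ0, abs_of_nonneg (hd0 t s), one_mul]
    exact le_trans (mul_le_mul_of_nonneg_left (hdle t s) (pow_nonneg hγ0 t))
      (le_of_eq (mul_one _))
  have hsum_ts : ∀ s a, Summable (fun t => γ ^ t * d t s * pol₁ s a * adv s a) := by
    intro s a
    have := ((hsum_td s).mul_right (pol₁ s a)).mul_right (adv s a)
    exact this
  have hterm : ∀ s a, visitDist P pol₁ γ μ s * pol₁ s a * adv s a
      = (1 - γ) * ∑' t, γ ^ t * d t s * pol₁ s a * adv s a := by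
    intro s a
    calc visitDist P pol₁ γ μ s * pol₁ s a * adv s a
        = (1 - γ) * ((∑' t, γ ^ t * d t s) * (pol₁ s a * adv s a)) := by
          unfold visitDist
          rw [← hd]
          ring
      _ = (1 - γ) * (∑' t, (γ ^ t * d t s) * (pol₁ s a * adv s a)) := by
          rw [tsum_mul_right]
      _ = (1 - γ) * ∑' t, γ ^ t * d t s * pol₁ s a * adv s a := by
          congr 1
          exact tsum_congr fun t => by ring
  have hswap : ∑ s, ∑ a, ∑' t, γ ^ t * d t s * pol₁ s a * adv s a = ∑' t, aterm t := by
    have h1 : ∀ s, ∑ a, ∑' t, γ ^ t * d t s * pol₁ s a * adv s a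
        = ∑' t, ∑ a, γ ^ t * d t s * pol₁ s a * adv s a := by
      intro s
      exact (Summable.tsum_finsetSum fun a _ => hsum_ts s a).symm
    simp only [h1]
    rw [← Summable.tsum_finsetSum fun s _ => summable_sum fun a _ => hsum_ts s a]
    refine tsum_congr fun t => ?_
    rw [hadef]
    simp only
    rw [Finset.mul_sum]
    refine Finset.sum_congr rfl fun s _ => ?_
    rw [Finset.mul_sum]
    exact Finset.sum_congr rfl fun a _ => by ring
  have hRHS : ∑ s, ∑ a, visitDist P pol₁ γ μ s * pol₁ s a * adv s a
      = (1 - γ) * ∑' t, aterm t := by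
    simp only [hterm, ← Finset.mul_sum]
    rw [hswap]
  rw [hRHS, hLHS.symm]
  rw [one_div]
  rw [← mul_assoc, inv_mul_cancel₀ hγne, one_mul]
end

section
/- If the advantage functions along NPG iterates satisfy A^{π_k}(s,a) ≤ −(1−1/λ)Δ for all k ≥ κ (for fixed suboptimal action a at state s, with λ > 1, Δ > 0), then the NPG iterates satisfy π_K(a|s) ≤ π_κ(a|s) · exp(−(K−κ)(1−1/λ) η Δ) for all K ≥ κ. -/
open Finset

/-- If the advantage functions along NPG iterates satisfy
`A^{π_k}(s,a) ≤ −(1−1/λ)Δ` for all `k ≥ κ` (for a fixed suboptimal action `a` at a fixed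
state `s`, with `λ > 1`, `Δ > 0`), then the NPG iterates satisfy
`π_K(a|s) ≤ π_κ(a|s) · exp(−(K−κ)(1−1/λ) η Δ)` for all `K ≥ κ`.
Stated at the fixed state `s`: `pol k = π_k(·|s)` and `Q k = Q^{π_k}(s,·)`, with
advantage `A^{π_k}(s,a) = Q k a − ∑_{a'} π_k(a'|s) Q k a'`. -/
theorem npg_suboptimal_prob_decay {A : Type*} [Fintype A]
    (pol : ℕ → A → ℝ) (Q : ℕ → A → ℝ) (η Δ lam : ℝ) (κ : ℕ)
    (hη : 0 < η) (hΔ : 0 < Δ) (hlam : 1 < lam)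
    (hpos : ∀ k a, 0 < pol k a)
    (hsum : ∀ k, ∑ a, pol k a = 1)
    (hupd : ∀ k a, pol (k + 1) a =
      pol k a * Real.exp (η * Q k a) / ∑ a', pol k a' * Real.exp (η * Q k a'))
    (a : A)
    (hadv : ∀ k, κ ≤ k → Q k a - ∑ a', pol k a' * Q k a' ≤ -(1 - 1 / lam) * Δ) :
    ∀ K, κ ≤ K →
      pol K a ≤ pol κ a * Real.exp (-((K : ℝ) - κ) * (1 - 1 / lam) * η * Δ) := by
  have key : ∀ k, κ ≤ k →
      pol (k + 1) a ≤ pol k a * Real.exp (-(1 - 1 / lam) * η * Δ) := by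
    intro k hk
    have hden : Real.exp (η * ∑ a', pol k a' * Q k a') ≤
        ∑ a', pol k a' * Real.exp (η * Q k a') := by
      have hj := convexOn_exp.map_sum_le (t := Finset.univ) (w := pol k)
        (p := fun a' => η * Q k a') (fun i _ => (hpos k i).le) (hsum k)
        (fun i _ => Set.mem_univ _)
      simpa [smul_eq_mul, Finset.mul_sum, mul_comm, mul_left_comm, mul_assoc] using hj
    have hdenpos : 0 < ∑ a', pol k a' * Real.exp (η * Q k a') :=
      lt_of_lt_of_le (Real.exp_pos _) hden
    have h1 : pol (k + 1) a ≤ pol k a * Real.exp (η * Q k a) /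
        Real.exp (η * ∑ a', pol k a' * Q k a') := by
      rw [hupd k a]
      apply div_le_div_of_nonneg_left _ (Real.exp_pos _) hden
      exact mul_nonneg (hpos k a).le (Real.exp_pos _).le
    have h2 : pol k a * Real.exp (η * Q k a) /
        Real.exp (η * ∑ a', pol k a' * Q k a') =
        pol k a * Real.exp (η * (Q k a - ∑ a', pol k a' * Q k a')) := by
      rw [mul_div_assoc, ← Real.exp_sub, ← mul_sub]
    have h3 : η * (Q k a - ∑ a', pol k a' * Q k a') ≤ -(1 - 1 / lam) * η * Δ := by
      have := mul_le_mul_of_nonneg_left (hadv k hk) hη.le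
      nlinarith
    calc pol (k + 1) a ≤ pol k a * Real.exp (η * (Q k a - ∑ a', pol k a' * Q k a')) := by
          rw [← h2]; exact h1
      _ ≤ pol k a * Real.exp (-(1 - 1 / lam) * η * Δ) := by
          apply mul_le_mul_of_nonneg_left _ (hpos k a).le
          exact Real.exp_le_exp.2 h3
  intro K hK
  induction K, hK using Nat.le_induction with
  | base => simp
  | succ K hK ih =>
    calc pol (K + 1) a ≤ pol K a * Real.exp (-(1 - 1 / lam) * η * Δ) := key K hK
      _ ≤ (pol κ a * Real.exp (-((K : ℝ) - κ) * (1 - 1 / lam) * η * Δ)) *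
          Real.exp (-(1 - 1 / lam) * η * Δ) :=
        mul_le_mul_of_nonneg_right ih (Real.exp_pos _).le
      _ = pol κ a * Real.exp (-((K + 1 : ℕ) - (κ : ℝ)) * (1 - 1 / lam) * η * Δ) := by
          rw [mul_assoc, ← Real.exp_add]
          push_cast
          ring_nf
end

section
/- Lower bound for single-state NPG: consider rewards r : A → [0,1] on a finite action set A with r* = max_a r(a), optimality gap Δ = r* − max_{a: r(a)<r*} r(a) > 0, and the softmax iterate π_K(a) = exp(ηK r(a))/∑_b exp(ηK r(b)). Then V* − V^{π_K} = (1/(1−γ)) ∑_a π_K(a)(r* − r(a)) ≥ (Δ/((1−γ)|A|)) e^{−ηKΔ} for all K ≥ 0, provided at least one suboptimal action with r(a) = r* − Δ exists. -/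
open Finset

/-- Lower bound for single-state NPG: with rewards `r : A → [0,1]`, `r* = max_a r(a)`,
optimality gap `Δ = r* − max_{a : r(a) < r*} r(a) > 0`, and softmax iterate
`π_K(a) = exp(ηK r(a))/∑_b exp(ηK r(b))`, we have
`V* − V^{π_K} = (1/(1−γ)) ∑_a π_K(a)(r* − r(a)) ≥ (Δ/((1−γ)|A|)) e^{−ηKΔ}` for all `K ≥ 0`,
provided at least one suboptimal action with `r(a) = r* − Δ` exists. -/
theorem single_state_npg_lower_bound {A : Type*} [Fintype A] [Nonempty A]
    (r : A → ℝ) (hr : ∀ a, r a ∈ Set.Icc (0 : ℝ) 1)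
    (γ η : ℝ) (hγ : γ ∈ Set.Ioo (0 : ℝ) 1) (hη : 0 < η)
    (rstar : ℝ) (hrstar : IsGreatest (Set.range r) rstar)
    (Δ : ℝ) (hΔpos : 0 < Δ)
    (hgap : ∀ a, r a < rstar → r a ≤ rstar - Δ)
    (hattain : ∃ a, r a = rstar - Δ)
    (K : ℕ) (polK : A → ℝ)
    (hpolK : ∀ a, polK a =
      Real.exp (η * K * r a) / ∑ b, Real.exp (η * K * r b)) :
    rstar / (1 - γ) - (1 / (1 - γ)) * ∑ a, polK a * r a =
        (1 / (1 - γ)) * ∑ a, polK a * (rstar - r a) ∧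
      (1 / (1 - γ)) * ∑ a, polK a * (rstar - r a) ≥
        Δ / ((1 - γ) * (Fintype.card A)) * Real.exp (-η * K * Δ) := by
  set S : ℝ := ∑ b, Real.exp (η * K * r b) with hS
  have hSpos : 0 < S := Finset.sum_pos (fun b _ => Real.exp_pos _) univ_nonempty
  have hsum1 : ∑ a, polK a = 1 := by
    simp only [hpolK]
    rw [← Finset.sum_div, ← hS, div_self hSpos.ne']
  have hle : ∀ a, r a ≤ rstar := fun a => hrstar.2 ⟨a, rfl⟩
  have hpnn : ∀ a, 0 ≤ polK a := fun a => by
    rw [hpolK]; positivity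
  have hγ1 : 0 < 1 - γ := by linarith [hγ.2]
  have heq : rstar / (1 - γ) - (1 / (1 - γ)) * ∑ a, polK a * r a =
      (1 / (1 - γ)) * ∑ a, polK a * (rstar - r a) := by
    have : ∑ a, polK a * (rstar - r a) = rstar - ∑ a, polK a * r a := by
      simp only [mul_sub]
      rw [Finset.sum_sub_distrib, ← Finset.sum_mul, hsum1, one_mul]
    rw [this]; ring
  refine ⟨heq, ?_⟩
  obtain ⟨a0, ha0⟩ := hattain
  have hcard : (0 : ℝ) < Fintype.card A := by
    exact_mod_cast Fintype.card_pos
  -- sum ≥ polK a0 * Δ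
  have h1 : polK a0 * Δ ≤ ∑ a, polK a * (rstar - r a) := by
    have := Finset.single_le_sum (f := fun a => polK a * (rstar - r a))
      (fun a _ => mul_nonneg (hpnn a) (by linarith [hle a])) (Finset.mem_univ a0)
    calc polK a0 * Δ = polK a0 * (rstar - r a0) := by rw [ha0]; ring
    _ ≤ _ := this
  -- S ≤ card * exp(ηK rstar)
  have hSle : S ≤ (Fintype.card A) * Real.exp (η * K * rstar) := by
    calc S ≤ ∑ _b : A, Real.exp (η * K * rstar) := by
          apply Finset.sum_le_sum
          intro b _
          exact Real.exp_le_exp.mpr (mul_le_mul_of_nonneg_left (hle b) (by positivity))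
      _ = (Fintype.card A) * Real.exp (η * K * rstar) := by
          rw [Finset.sum_const, nsmul_eq_mul, Fintype.card]
  have hp0 : Real.exp (-η * K * Δ) / Fintype.card A ≤ polK a0 := by
    rw [hpolK, ha0]
    rw [div_le_div_iff₀ hcard hSpos]
    calc Real.exp (-η * ↑K * Δ) * S
        ≤ Real.exp (-η * ↑K * Δ) * ((Fintype.card A) * Real.exp (η * K * rstar)) :=
          mul_le_mul_of_nonneg_left hSle (Real.exp_pos _).le
      _ = Real.exp (η * ↑K * (rstar - Δ)) * ↑(Fintype.card A) := by
          rw [mul_comm (↑(Fintype.card A)) (Real.exp (η * ↑K * rstar)), ← mul_assoc,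
            ← Real.exp_add]
          ring_nf
  calc Δ / ((1 - γ) * (Fintype.card A)) * Real.exp (-η * K * Δ)
      = (1 / (1 - γ)) * ((Real.exp (-η * K * Δ) / Fintype.card A) * Δ) := by
        field_simp
    _ ≤ (1 / (1 - γ)) * (polK a0 * Δ) := by
        apply mul_le_mul_of_nonneg_left _ (by positivity)
        exact mul_le_mul_of_nonneg_right hp0 hΔpos.le
    _ ≤ (1 / (1 - γ)) * ∑ a, polK a * (rstar - r a) := by
        apply mul_le_mul_of_nonneg_left h1 (by positivity)
end

section
/- Single-state NPG Lyapunov drift: with π_{k+1}(a) = π_k(a) exp(η r(a))/∑_{a'} π_k(a') exp(η r(a')), the error satisfies V* − V^{π_{k+1}} ≤ (V* − V^{π_k}) / (∑_a π_k(a) exp(η(r(a) − r* + Δ))), where Δ = r* − max_{a∉A*} r(a). -/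
open Finset

/-- Single-state NPG Lyapunov drift: with
`π_{k+1}(a) = π_k(a) exp(η r(a))/∑_{a'} π_k(a') exp(η r(a'))`, the error satisfies
`V* − V^{π_{k+1}} ≤ (V* − V^{π_k}) / (∑_a π_k(a) exp(η(r(a) − r* + Δ)))`,
where `r* = max_a r(a)`, `Δ = r* − max_{a∉A*} r(a)`, `V^π = (1/(1−γ)) ∑_a π(a) r(a)`,
and `V* = r*/(1−γ)`. -/
theorem single_state_npg_drift {A : Type*} [Fintype A] [Nonempty A]
    (r : A → ℝ) (hr : ∀ a, r a ∈ Set.Icc (0 : ℝ) 1)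
    (γ η : ℝ) (hγ : γ ∈ Set.Ioo (0 : ℝ) 1) (hη : 0 < η)
    (rstar : ℝ) (hrstar : IsGreatest (Set.range r) rstar)
    (Δ : ℝ) (hΔpos : 0 < Δ)
    (hgap : ∀ a, r a < rstar → r a ≤ rstar - Δ)
    (hattain : ∃ a, r a = rstar - Δ)
    (pol : A → ℝ) (hpos : ∀ a, 0 < pol a) (hsum : ∑ a, pol a = 1)
    (pol' : A → ℝ)
    (hupd : ∀ a, pol' a =
      pol a * Real.exp (η * r a) / ∑ a', pol a' * Real.exp (η * r a')) :
    rstar / (1 - γ) - (1 / (1 - γ)) * ∑ a, pol' a * r a ≤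
      (rstar / (1 - γ) - (1 / (1 - γ)) * ∑ a, pol a * r a) /
        ∑ a, pol a * Real.exp (η * (r a - rstar + Δ)) := by
  have hc : (0:ℝ) < 1 - γ := by have := hγ.2; linarith
  set Z := ∑ a', pol a' * Real.exp (η * r a') with hZ
  have hZpos : 0 < Z := Finset.sum_pos (fun a _ => mul_pos (hpos a) (Real.exp_pos _)) univ_nonempty
  set Tr := ∑ a, pol a * Real.exp (η * r a) * r a with hTr
  set S := ∑ a, pol a * r a with hS
  have hD : (∑ a, pol a * Real.exp (η * (r a - rstar + Δ))) = Real.exp (η * (Δ - rstar)) * Z := by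
    rw [hZ, Finset.mul_sum]
    refine Finset.sum_congr rfl fun a _ => ?_
    rw [show η * (r a - rstar + Δ) = η * (Δ - rstar) + η * r a by ring, Real.exp_add]
    ring
  have hDpos : 0 < ∑ a, pol a * Real.exp (η * (r a - rstar + Δ)) := by
    rw [hD]; positivity
  have key : rstar * Z - Tr ≤ Real.exp (η * (rstar - Δ)) * (rstar - S) := by
    have h1 : rstar * Z - Tr = ∑ a, pol a * Real.exp (η * r a) * (rstar - r a) := by
      rw [hZ, hTr, Finset.mul_sum, ← Finset.sum_sub_distrib]
      exact Finset.sum_congr rfl fun a _ => by ring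
    have h2 : rstar - S = ∑ a, pol a * (rstar - r a) := by
      have : (∑ a, pol a * (rstar - r a)) = (∑ a, pol a) * rstar - ∑ a, pol a * r a := by
        rw [Finset.sum_mul, ← Finset.sum_sub_distrib]
        exact Finset.sum_congr rfl fun a _ => by ring
      rw [hS, this, hsum]; ring
    rw [h1, h2, Finset.mul_sum]
    refine Finset.sum_le_sum fun a _ => ?_
    rcases eq_or_lt_of_le (hrstar.2 ⟨a, rfl⟩) with h | h
    · simp [show rstar - r a = 0 by linarith]
    · have hle : r a ≤ rstar - Δ := hgap a h
      have hexp : Real.exp (η * r a) ≤ Real.exp (η * (rstar - Δ)) :=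
        Real.exp_le_exp.2 (by nlinarith)
      have hnn : 0 ≤ pol a * (rstar - r a) :=
        mul_nonneg (hpos a).le (by linarith)
      calc pol a * Real.exp (η * r a) * (rstar - r a)
          = (pol a * (rstar - r a)) * Real.exp (η * r a) := by ring
        _ ≤ (pol a * (rstar - r a)) * Real.exp (η * (rstar - Δ)) :=
            mul_le_mul_of_nonneg_left hexp hnn
        _ = Real.exp (η * (rstar - Δ)) * (pol a * (rstar - r a)) := by ring
  have hS' : ∑ a, pol' a * r a = Tr / Z := by
    rw [hTr, Finset.sum_div]
    exact Finset.sum_congr rfl fun a _ => by rw [hupd a, div_mul_eq_mul_div]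
  rw [le_div_iff₀ hDpos, hD, hS']
  have hEE : Real.exp (η * (Δ - rstar)) * Real.exp (η * (rstar - Δ)) = 1 := by
    rw [← Real.exp_add, show η * (Δ - rstar) + η * (rstar - Δ) = 0 by ring, Real.exp_zero]
  have h1 : (rstar / (1 - γ) - 1 / (1 - γ) * (Tr / Z)) * (Real.exp (η * (Δ - rstar)) * Z)
      = (1 / (1 - γ)) * Real.exp (η * (Δ - rstar)) * (rstar * Z - Tr) := by
    field_simp
  rw [h1]
  have hpos2 : 0 ≤ (1 / (1 - γ)) * Real.exp (η * (Δ - rstar)) := by positivity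
  calc (1 / (1 - γ)) * Real.exp (η * (Δ - rstar)) * (rstar * Z - Tr)
      ≤ (1 / (1 - γ)) * Real.exp (η * (Δ - rstar)) * (Real.exp (η * (rstar - Δ)) * (rstar - S)) := by
        exact mul_le_mul_of_nonneg_left key hpos2
    _ = (1 / (1 - γ)) * (Real.exp (η * (Δ - rstar)) * Real.exp (η * (rstar - Δ))) * (rstar - S) := by ring
    _ = rstar / (1 - γ) - 1 / (1 - γ) * S := by rw [hEE]; ring
end

section
/- In the single-state setting, if ∑_{a∈A*} π_k(a) ≥ 1 − (C(1−γ))/(kΔ) and k ≥ ⌈(C(1−γ)/Δ)/(1 − e^{−ηΔλ})⌉ for some λ ∈ (0,1), then ∑_a π_k(a) exp(η(r(a) − r* + Δ)) ≥ exp(ηΔ(1−λ)). -/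
/-!
On `A*` every summand carries the factor `exp (η Δ)`, and all other summands are nonnegative, so the
sum is at least `π_k(A*) · exp (η Δ)`. The condition on `k` says precisely that the missing mass
`C (1 - γ) / (k Δ)` is at most `1 - exp (-η Δ λ)`, hence `π_k(A*) ≥ exp (-η Δ λ)`.
-/

open Finset

theorem div_natCast_le_of_natCeil_div_le {x e : ℝ} (he : 0 < e) {k : ℕ} (hk : ⌈x / e⌉₊ ≤ k) :
    x / k ≤ e := by
  rcases Nat.eq_zero_or_pos k with rfl | hk0
  · simpa using he.le
  have hxk : x / e ≤ k := (Nat.le_ceil _).trans (by exact_mod_cast hk)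
  rw [div_le_iff₀ (by exact_mod_cast hk0)]
  rw [div_le_iff₀ he] at hxk
  linarith

theorem sum_filter_mul_le_sum_mul {ι : Type*} [Fintype ι] {p : ι → Prop} [DecidablePred p]
    {w f : ι → ℝ} {c : ℝ} (hw : ∀ i, 0 ≤ w i) (hf : ∀ i, 0 ≤ f i) (hc : ∀ i, p i → f i = c) :
    (∑ i ∈ univ.filter p, w i) * c ≤ ∑ i, w i * f i :=
  calc (∑ i ∈ univ.filter p, w i) * c = ∑ i ∈ univ.filter p, w i * f i := by
        rw [sum_mul]
        exact sum_congr rfl fun i hi => by rw [hc i (mem_filter.1 hi).2]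
    _ ≤ ∑ i, w i * f i :=
        sum_le_sum_of_subset_of_nonneg (subset_univ _) fun i _ _ => mul_nonneg (hw i) (hf i)

theorem single_state_denominator_bound_general {A : Type*} [Fintype A]
    (r : A → ℝ)
    (γ η C lam : ℝ) (hη : 0 < η)
    (hlam : lam ∈ Set.Ioo (0 : ℝ) 1)
    (rstar : ℝ)
    (Δ : ℝ) (hΔpos : 0 < Δ)
    (pol : A → ℝ) (hpos : ∀ a, 0 ≤ pol a)
    (k : ℕ)
    (hmass : 1 - C * (1 - γ) / (k * Δ) ≤
      ∑ a ∈ Finset.univ.filter (fun a => r a = rstar), pol a)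
    (hk : ⌈(C * (1 - γ) / Δ) / (1 - Real.exp (-η * Δ * lam))⌉₊ ≤ k) :
    Real.exp (η * Δ * (1 - lam)) ≤
      ∑ a, pol a * Real.exp (η * (r a - rstar + Δ)) := by
  have hslack : 0 < 1 - Real.exp (-η * Δ * lam) :=
    sub_pos.2 (Real.exp_lt_one_iff.2 (by nlinarith [mul_pos (mul_pos hη hΔpos) hlam.1]))
  have hmissing : C * (1 - γ) / (k * Δ) ≤ 1 - Real.exp (-η * Δ * lam) := by
    rw [mul_comm (k : ℝ), ← div_div]
    exact div_natCast_le_of_natCeil_div_le hslack hk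
  calc Real.exp (η * Δ * (1 - lam))
      = Real.exp (-η * Δ * lam) * Real.exp (η * Δ) := by rw [← Real.exp_add]; ring_nf
    _ ≤ (∑ a ∈ univ.filter (fun a => r a = rstar), pol a) * Real.exp (η * Δ) := by
        gcongr; linarith
    _ ≤ ∑ a, pol a * Real.exp (η * (r a - rstar + Δ)) :=
        sum_filter_mul_le_sum_mul hpos (fun _ => (Real.exp_pos _).le)
          fun a ha => by rw [ha, sub_self, zero_add]

/-- In the single-state setting, if `∑_{a∈A*} π_k(a) ≥ 1 − C(1−γ)/(kΔ)` and
`k ≥ ⌈(C(1−γ)/Δ)/(1 − e^{−ηΔλ})⌉` for some `λ ∈ (0,1)`, then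
`∑_a π_k(a) exp(η(r(a) − r* + Δ)) ≥ exp(ηΔ(1−λ))`, where `A* = {a : r(a) = r*}`,
`r* = max_a r(a)`, and `Δ = r* − max_{a∉A*} r(a) > 0`. -/
theorem single_state_denominator_bound {A : Type*} [Fintype A] [Nonempty A]
    (r : A → ℝ) (hr : ∀ a, r a ∈ Set.Icc (0 : ℝ) 1)
    (γ η C lam : ℝ) (hγ : γ ∈ Set.Ioo (0 : ℝ) 1) (hη : 0 < η) (hC : 0 < C)
    (hlam : lam ∈ Set.Ioo (0 : ℝ) 1)
    (rstar : ℝ) (hrstar : IsGreatest (Set.range r) rstar)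
    (Δ : ℝ) (hΔpos : 0 < Δ)
    (hgap : ∀ a, r a < rstar → r a ≤ rstar - Δ)
    (hattain : ∃ a, r a = rstar - Δ)
    (pol : A → ℝ) (hpos : ∀ a, 0 ≤ pol a) (hsum : ∑ a, pol a = 1)
    (k : ℕ)
    (hmass : 1 - C * (1 - γ) / (k * Δ) ≤
      ∑ a ∈ Finset.univ.filter (fun a => r a = rstar), pol a)
    (hk : ⌈(C * (1 - γ) / Δ) / (1 - Real.exp (-η * Δ * lam))⌉₊ ≤ k) :
    Real.exp (η * Δ * (1 - lam)) ≤
      ∑ a, pol a * Real.exp (η * (r a - rstar + Δ)) :=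
  single_state_denominator_bound_general r γ η C lam hη hlam rstar Δ hΔpos pol hpos k hmass hk
end

section
/- Softmax lower bound on maximizers: under the same setup, if additionally η ≥ (L + log(|A|/π(a)))/Δ for some L > 0 and a ∈ A*, then, with π̃(a) = π(a)/∑_{a'∈A*} π(a'), the softmax update satisfies π'(a) ≥ π̃(a)/(1 + π̃(a) e^{−L}). -/
/-!
Split the softmax normaliser `Z = ∑ π(b) e^{ηQ(b)}` at `A*`. On `A*` every `Q(b)` equals
`M = max Q`, contributing `e^{ηM} ∑_{A*} π`; off `A*` one has `Q(b) ≤ M − Δ`, so the rest is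
at most `e^{ηM} e^{−ηΔ}`, and the step-size condition makes `e^{−ηΔ} ≤ π(a) e^{−L}/|A|`.
Hence `π'(a) = π(a) e^{ηM}/Z ≥ π(a)/(∑_{A*} π + π(a) e^{−L})`.
-/

open Finset

attribute [local instance] Classical.propDecidable

/-- The set of maximizers `A* = argmax Q` of a function on a finite type. -/
noncomputable def argmaxSet {A : Type*} [Fintype A] (Q : A → ℝ) : Finset A :=
  Finset.univ.filter (fun a => ∀ a', Q a' ≤ Q a)

theorem mem_argmaxSet {A : Type*} [Fintype A] {Q : A → ℝ} {a : A} :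
    a ∈ argmaxSet Q ↔ ∀ a', Q a' ≤ Q a := by
  simp [argmaxSet]

theorem sup'_univ_eq_of_mem_argmaxSet {A : Type*} [Fintype A] {Q : A → ℝ} {a : A}
    (ha : a ∈ argmaxSet Q) : univ.sup' ⟨a, mem_univ a⟩ Q = Q a :=
  le_antisymm (sup'_le _ _ fun b _ => mem_argmaxSet.1 ha b) (le_sup' Q (mem_univ a))

theorem sum_mul_exp_le_of_gap {ι : Type*} [Fintype ι] (s : Finset ι) (p Q : ι → ℝ)
    {η M δ : ℝ} (hη : 0 ≤ η) (hp : ∀ b, 0 ≤ p b) (hp1 : ∑ b, p b ≤ 1)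
    (hmax : ∀ b ∈ s, Q b = M) (hgap : ∀ b ∉ s, Q b ≤ M - δ) :
    ∑ b, p b * Real.exp (η * Q b) ≤ Real.exp (η * M) * (∑ b ∈ s, p b + Real.exp (-(η * δ))) := by
  have hin : ∑ b ∈ s, p b * Real.exp (η * Q b) = (∑ b ∈ s, p b) * Real.exp (η * M) := by
    rw [sum_mul]
    exact sum_congr rfl fun b hb => by rw [hmax b hb]
  have hout : ∑ b ∈ sᶜ, p b * Real.exp (η * Q b) ≤ Real.exp (η * M) * Real.exp (-(η * δ)) :=
    calc ∑ b ∈ sᶜ, p b * Real.exp (η * Q b)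
        ≤ ∑ b ∈ sᶜ, p b * Real.exp (η * (M - δ)) := by
          gcongr with b hb
          · exact hp b
          · exact hgap b (mem_compl.1 hb)
      _ = (∑ b ∈ sᶜ, p b) * Real.exp (η * (M - δ)) := (sum_mul ..).symm
      _ ≤ 1 * Real.exp (η * (M - δ)) := by
          gcongr
          exact (sum_le_univ_sum_of_nonneg hp).trans hp1
      _ = Real.exp (η * M) * Real.exp (-(η * δ)) := by rw [← Real.exp_add]; ring_nf
  rw [← sum_add_sum_compl s, hin]
  linarith

theorem exp_neg_mul_le_of_log_div_le {n p L η Δ : ℝ} (hn : 0 < n) (hp : 0 < p) (hΔ : 0 < Δ)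
    (hstep : (L + Real.log (n / p)) / Δ ≤ η) :
    Real.exp (-(η * Δ)) ≤ p / n * Real.exp (-L) :=
  calc Real.exp (-(η * Δ))
      ≤ Real.exp (-L - Real.log (n / p)) := by
        rw [div_le_iff₀ hΔ] at hstep
        gcongr
        linarith
    _ = p / n * Real.exp (-L) := by
        rw [Real.exp_sub, Real.exp_log (by positivity)]
        field_simp

theorem softmax_maximizer_lower_bound_general {A : Type*} [Fintype A] [Nonempty A]
    (Q : A → ℝ) (pol : A → ℝ) (η L : ℝ) (hη : 0 < η)
    (hpos : ∀ a, 0 < pol a) (hsum : ∑ a, pol a = 1)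
    (hsub : (Finset.univ.filter (fun a => a ∉ argmaxSet Q)).Nonempty)
    (Δ : ℝ)
    (hΔ : Δ = Finset.univ.sup' Finset.univ_nonempty Q -
      (Finset.univ.filter (fun a => a ∉ argmaxSet Q)).sup' hsub Q)
    (hΔpos : 0 < Δ)
    (pol' : A → ℝ)
    (hupd : ∀ b, pol' b =
      pol b * Real.exp (η * Q b) / ∑ b', pol b' * Real.exp (η * Q b'))
    (a : A) (ha : a ∈ argmaxSet Q)
    (hstep : (L + Real.log ((Fintype.card A) / pol a)) / Δ ≤ η) :
    (pol a / ∑ b ∈ argmaxSet Q, pol b) /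
        (1 + (pol a / ∑ b ∈ argmaxSet Q, pol b) * Real.exp (-L)) ≤ pol' a := by
  set S := ∑ b ∈ argmaxSet Q, pol b
  have hS : 0 < S := sum_pos (fun b _ => hpos b) ⟨a, ha⟩
  have hpa := hpos a
  have hgap : ∀ b ∉ argmaxSet Q, Q b ≤ Q a - Δ := fun b hb => by
    have := le_sup' Q (mem_filter.2 ⟨mem_univ b, hb⟩ : b ∈ univ.filter (· ∉ argmaxSet Q))
    rw [hΔ, ← sup'_univ_eq_of_mem_argmaxSet ha]
    linarith
  have hZ := sum_mul_exp_le_of_gap (argmaxSet Q) pol Q hη.le (fun b => (hpos b).le) hsum.le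
    (fun b hb => le_antisymm (mem_argmaxSet.1 ha b) (mem_argmaxSet.1 hb a)) hgap
  have htail : Real.exp (-(η * Δ)) ≤ pol a * Real.exp (-L) := by
    have hcard : (1 : ℝ) ≤ Fintype.card A := Nat.one_le_cast.2 Fintype.card_pos
    refine (exp_neg_mul_le_of_log_div_le (by positivity) hpa hΔpos hstep).trans ?_
    gcongr
    exact div_le_self hpa.le hcard
  calc (pol a / S) / (1 + (pol a / S) * Real.exp (-L))
      = pol a / (S + pol a * Real.exp (-L)) := by field_simp
    _ ≤ pol a / (S + Real.exp (-(η * Δ))) := by gcongr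
    _ = pol a * Real.exp (η * Q a) / (Real.exp (η * Q a) * (S + Real.exp (-(η * Δ)))) := by
        field_simp
    _ ≤ pol' a := by
        rw [hupd a]
        gcongr
        exact sum_pos (fun b _ => mul_pos (hpos b) (Real.exp_pos _)) univ_nonempty

/-- Softmax lower bound on maximizers: with `A* = argmax Q`, gap
`Δ = max Q − max_{a∉A*} Q > 0`, a fully supported distribution `π` and softmax update
`π'(a) = π(a)exp(ηQ(a))/∑_{a'} π(a')exp(ηQ(a'))`, if additionally
`η ≥ (L + log(|A|/π(a)))/Δ` for some `L > 0` and `a ∈ A*`, then, with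
`π̃(a) = π(a)/∑_{a'∈A*} π(a')`, we have `π'(a) ≥ π̃(a)/(1 + π̃(a) e^{−L})`. -/
theorem softmax_maximizer_lower_bound {A : Type*} [Fintype A] [Nonempty A]
    (Q : A → ℝ) (pol : A → ℝ) (η L : ℝ) (hη : 0 < η) (hL : 0 < L)
    (hpos : ∀ a, 0 < pol a) (hsum : ∑ a, pol a = 1)
    (hsub : (Finset.univ.filter (fun a => a ∉ argmaxSet Q)).Nonempty)
    (Δ : ℝ)
    (hΔ : Δ = Finset.univ.sup' Finset.univ_nonempty Q -
      (Finset.univ.filter (fun a => a ∉ argmaxSet Q)).sup' hsub Q)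
    (hΔpos : 0 < Δ)
    (pol' : A → ℝ)
    (hupd : ∀ b, pol' b =
      pol b * Real.exp (η * Q b) / ∑ b', pol b' * Real.exp (η * Q b'))
    (a : A) (ha : a ∈ argmaxSet Q)
    (hstep : (L + Real.log ((Fintype.card A) / pol a)) / Δ ≤ η) :
    (pol a / ∑ b ∈ argmaxSet Q, pol b) /
        (1 + (pol a / ∑ b ∈ argmaxSet Q, pol b) * Real.exp (-L)) ≤ pol' a :=
  softmax_maximizer_lower_bound_general Q pol η L hη hpos hsum hsub Δ hΔ hΔpos pol' hupd a ha hstep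
end

section
/- Superlinear recursion unrolling: let p ∈ (1,2], b > 0, and nonnegative sequences (r_k), (e_k) satisfy r_k ≤ e_{k−1} + b·r_{k−1}^p for all k ≥ 1. Then for all k ≥ 1, r_k ≤ ∑_{i=0}^{k−1} e_{k−1−i}^{p^i} b^{(p^i−1)/(p−1)} p^{(p^{i+1}−(i+1)p+i)/(p−1)²} + p^{(p^{k+1}−(k+1)p+k)/(p−1)²} b^{(p^k−1)/(p−1)} r_0^{p^k}. -/
open Finset

private lemma two_term {p : ℝ} (hp1 : 1 ≤ p) (hp2 : p ≤ 2) {a c : ℝ} (ha : 0 ≤ a) (hc : 0 ≤ c) :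
    (a + c) ^ p ≤ p * a ^ p + p * c ^ p := by
  have h2 : (2:ℝ) ^ (p-1) ≤ p := by
    have := rpow_one_add_le_one_add_mul_self (s := (1:ℝ)) (by norm_num) (p := p - 1)
      (by linarith) (by linarith)
    norm_num at this; linarith
  have key : (a + c) ^ p ≤ (2:ℝ) ^ (p-1) * (a ^ p + c ^ p) := by
    have h := NNReal.rpow_add_le_mul_rpow_add_rpow ⟨a, ha⟩ ⟨c, hc⟩ hp1
    have h' := NNReal.coe_le_coe.2 h
    push_cast [NNReal.coe_rpow] at h'
    convert h' using 2 <;> rfl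
  have hpos : 0 ≤ a ^ p + c ^ p := by positivity
  nlinarith [mul_le_mul_of_nonneg_right h2 hpos]

private lemma iter_ineq {p : ℝ} (hp1 : 1 ≤ p) (hp2 : p ≤ 2) (f : ℕ → ℝ) (hf : ∀ i, 0 ≤ f i) :
    ∀ n : ℕ, ∀ c : ℝ, 0 ≤ c →
      (∑ i ∈ Finset.range n, f i + c) ^ p ≤
        ∑ i ∈ Finset.range n, p ^ (i + 1) * f i ^ p + p ^ n * c ^ p := by
  intro n
  induction n with
  | zero => intro c hc; simp
  | succ n ih =>
    intro c hc
    have hfc : 0 ≤ f n + c := add_nonneg (hf n) hc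
    have step1 : (∑ i ∈ Finset.range (n+1), f i + c) ^ p ≤
        ∑ i ∈ Finset.range n, p ^ (i + 1) * f i ^ p + p ^ n * (f n + c) ^ p := by
      rw [Finset.sum_range_succ, add_assoc]
      exact ih (f n + c) hfc
    have step2 : (f n + c) ^ p ≤ p * f n ^ p + p * c ^ p := two_term hp1 hp2 (hf n) hc
    have hpn : (0:ℝ) ≤ p ^ n := by positivity
    calc (∑ i ∈ Finset.range (n+1), f i + c) ^ p
        ≤ ∑ i ∈ Finset.range n, p ^ (i + 1) * f i ^ p + p ^ n * (f n + c) ^ p := step1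
      _ ≤ ∑ i ∈ Finset.range n, p ^ (i + 1) * f i ^ p + p ^ n * (p * f n ^ p + p * c ^ p) := by
          gcongr
      _ = ∑ i ∈ Finset.range (n+1), p ^ (i + 1) * f i ^ p + p ^ (n+1) * c ^ p := by
          rw [Finset.sum_range_succ]; ring

private lemma term_id {p b : ℝ} (hp1 : 1 < p) (hb : 0 < b) (x : ℝ) (hx : 0 ≤ x) (i : ℕ) :
    b * p ^ (i + 1) * (x ^ (p ^ i) * b ^ ((p ^ i - 1) / (p - 1)) *
        p ^ ((p ^ (i + 1) - ((i : ℝ) + 1) * p + i) / (p - 1) ^ 2)) ^ p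
    = x ^ (p ^ (i + 1)) * b ^ ((p ^ (i + 1) - 1) / (p - 1)) *
        p ^ ((p ^ (i + 1 + 1) - ((↑(i + 1) : ℝ) + 1) * p + (↑(i + 1) : ℝ)) / (p - 1) ^ 2) := by
  have hp0 : (0:ℝ) < p := by linarith
  have hps : p - 1 ≠ 0 := by intro h; linarith [sub_eq_zero.mp h]
  rcases eq_or_lt_of_le hx with h | hx'
  · have h0 : x = 0 := h.symm
    have hne : (p : ℝ) ^ i ≠ 0 := by positivity
    have hne' : (p : ℝ) ^ (i+1) ≠ 0 := by positivity
    rw [h0, Real.zero_rpow hne, Real.zero_rpow hne']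
    rw [zero_mul, zero_mul, Real.zero_rpow (by positivity), mul_zero, zero_mul, zero_mul]
  · have hb' : b = Real.exp (Real.log b) := (Real.exp_log hb).symm
    have hpn : (p:ℝ) ^ (i+1) = Real.exp (Real.log p * ((i:ℝ)+1)) := by
      rw [Real.exp_mul, Real.exp_log hp0]
      rw [show ((i:ℝ)+1) = ((i+1 : ℕ) : ℝ) by push_cast; ring, Real.rpow_natCast]
    nth_rewrite 1 [hb']
    nth_rewrite 1 [hpn]
    simp only [Real.rpow_def_of_pos hx', Real.rpow_def_of_pos hb, Real.rpow_def_of_pos hp0,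
      ← Real.exp_add, ← Real.exp_mul, Real.exp_eq_exp]
    push_cast
    field_simp
    ring

private lemma tail_le {p b : ℝ} (hp1 : 1 < p) (hb : 0 < b) (x : ℝ) (hx : 0 ≤ x) (n : ℕ) :
    b * p ^ n * (p ^ ((p ^ (n + 1) - ((n : ℝ) + 1) * p + n) / (p - 1) ^ 2) *
        b ^ ((p ^ n - 1) / (p - 1)) * x ^ (p ^ n)) ^ p
    ≤ p ^ ((p ^ (n + 1 + 1) - ((↑(n + 1) : ℝ) + 1) * p + (↑(n + 1) : ℝ)) / (p - 1) ^ 2) *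
        b ^ ((p ^ (n + 1) - 1) / (p - 1)) * x ^ (p ^ (n + 1)) := by
  have hp0 : (0:ℝ) < p := by linarith
  have hps : p - 1 ≠ 0 := by intro h; linarith [sub_eq_zero.mp h]
  have heq : b * p ^ n * (p ^ ((p ^ (n + 1) - ((n : ℝ) + 1) * p + n) / (p - 1) ^ 2) *
        b ^ ((p ^ n - 1) / (p - 1)) * x ^ (p ^ n)) ^ p
      = p ^ ((p ^ (n + 1 + 1) - ((↑(n + 1) : ℝ) + 1) * p + (↑(n + 1) : ℝ)) / (p - 1) ^ 2 - 1) *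
        b ^ ((p ^ (n + 1) - 1) / (p - 1)) * x ^ (p ^ (n + 1)) := by
    rcases eq_or_lt_of_le hx with h | hx'
    · have h0 : x = 0 := h.symm
      have hne : (p : ℝ) ^ n ≠ 0 := by positivity
      have hne' : (p : ℝ) ^ (n+1) ≠ 0 := by positivity
      simp [h0, Real.zero_rpow hne, Real.zero_rpow hne',
        Real.zero_rpow (show p ≠ 0 by positivity)]
    · have hb' : b = Real.exp (Real.log b) := (Real.exp_log hb).symm
      have hpn : (p:ℝ) ^ n = Real.exp (Real.log p * (n:ℝ)) := by
        rw [Real.exp_mul, Real.exp_log hp0, Real.rpow_natCast]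
      nth_rewrite 1 [hb']
      nth_rewrite 1 [hpn]
      simp only [Real.rpow_def_of_pos hx', Real.rpow_def_of_pos hb, Real.rpow_def_of_pos hp0,
        ← Real.exp_add, ← Real.exp_mul, Real.exp_eq_exp]
      push_cast
      field_simp
      ring
  rw [heq]
  have h1 : p ^ ((p ^ (n + 1 + 1) - ((↑(n + 1) : ℝ) + 1) * p + (↑(n + 1) : ℝ)) / (p - 1) ^ 2 - 1)
      ≤ p ^ ((p ^ (n + 1 + 1) - ((↑(n + 1) : ℝ) + 1) * p + (↑(n + 1) : ℝ)) / (p - 1) ^ 2) :=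
    Real.rpow_le_rpow_of_exponent_le hp1.le (by linarith)
  have h2 : (0:ℝ) ≤ b ^ ((p ^ (n + 1) - 1) / (p - 1)) := Real.rpow_nonneg hb.le _
  have h3 : (0:ℝ) ≤ x ^ (p ^ (n + 1)) := Real.rpow_nonneg hx _
  gcongr

/-- Superlinear recursion unrolling: let `p ∈ (1,2]`, `b > 0`, and nonnegative sequences
`(r_k)`, `(e_k)` satisfy `r_k ≤ e_{k−1} + b·r_{k−1}^p` for all `k ≥ 1`.  Then for all
`k ≥ 1`,
`r_k ≤ ∑_{i=0}^{k−1} e_{k−1−i}^{p^i} b^{(p^i−1)/(p−1)} p^{(p^{i+1}−(i+1)p+i)/(p−1)²}`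
`      + p^{(p^{k+1}−(k+1)p+k)/(p−1)²} b^{(p^k−1)/(p−1)} r_0^{p^k}`. -/
theorem superlinear_recursion_unrolling (p b : ℝ) (hp1 : 1 < p) (hp2 : p ≤ 2) (hb : 0 < b)
    (r e : ℕ → ℝ) (hr : ∀ k, 0 ≤ r k) (he : ∀ k, 0 ≤ e k)
    (hrec : ∀ k, 1 ≤ k → r k ≤ e (k - 1) + b * r (k - 1) ^ p) :
    ∀ k, 1 ≤ k →
      r k ≤ (∑ i ∈ Finset.range k,
          e (k - 1 - i) ^ (p ^ i) * b ^ ((p ^ i - 1) / (p - 1)) *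
            p ^ ((p ^ (i + 1) - ((i : ℝ) + 1) * p + i) / (p - 1) ^ 2)) +
        p ^ ((p ^ (k + 1) - ((k : ℝ) + 1) * p + k) / (p - 1) ^ 2) *
          b ^ ((p ^ k - 1) / (p - 1)) * r 0 ^ (p ^ k) := by
  have hp0 : (0:ℝ) < p := by linarith
  have hps : p - 1 ≠ 0 := by intro h; linarith [sub_eq_zero.mp h]
  refine Nat.le_induction ?_ ?_
  · -- base case k = 1
    have h1 : r 1 ≤ e 0 + b * r 0 ^ p := by simpa using hrec 1 le_rfl
    simp only [Finset.sum_range_one]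
    norm_num
    rw [show (p ^ 2 - 2 * p + 1) / (p - 1) ^ 2 = 1 from by
        rw [div_eq_one_iff_eq (by positivity)]; ring,
      div_self hps, Real.rpow_one, Real.rpow_one]
    have h0 := Real.rpow_nonneg (hr 0) p
    nlinarith [mul_nonneg (mul_nonneg (show (0:ℝ) ≤ p - 1 by linarith) hb.le) h0]
  · -- inductive step
    intro n hn ih
    have hrn1 : r (n + 1) ≤ e n + b * r n ^ p := by simpa using hrec (n + 1) (by omega)
    set f : ℕ → ℝ := fun i => e (n - 1 - i) ^ (p ^ i) * b ^ ((p ^ i - 1) / (p - 1)) *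
        p ^ ((p ^ (i + 1) - ((i : ℝ) + 1) * p + i) / (p - 1) ^ 2) with hf_def
    set c : ℝ := p ^ ((p ^ (n + 1) - ((n : ℝ) + 1) * p + n) / (p - 1) ^ 2) *
        b ^ ((p ^ n - 1) / (p - 1)) * r 0 ^ (p ^ n) with hc_def
    have hf : ∀ i, 0 ≤ f i := fun i =>
      mul_nonneg (mul_nonneg (Real.rpow_nonneg (he _) _) (Real.rpow_nonneg hb.le _))
        (Real.rpow_nonneg hp0.le _)
    have hc : 0 ≤ c :=
      mul_nonneg (mul_nonneg (Real.rpow_nonneg hp0.le _) (Real.rpow_nonneg hb.le _))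
        (Real.rpow_nonneg (hr 0) _)
    have hsum : 0 ≤ ∑ i ∈ Finset.range n, f i := Finset.sum_nonneg fun i _ => hf i
    have h2 : r n ^ p ≤ (∑ i ∈ Finset.range n, f i + c) ^ p :=
      Real.rpow_le_rpow (hr n) ih hp0.le
    have h3 := iter_ineq hp1.le hp2 f hf n c hc
    -- termwise identification
    have hterm : ∀ i ∈ Finset.range n, b * (p ^ (i + 1) * f i ^ p) =
        e (n + 1 - 1 - (i + 1)) ^ (p ^ (i + 1)) * b ^ ((p ^ (i + 1) - 1) / (p - 1)) *
          p ^ ((p ^ (i + 1 + 1) - ((↑(i + 1) : ℝ) + 1) * p + (↑(i + 1) : ℝ)) / (p - 1) ^ 2) := by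
      intro i _
      have hidx : n + 1 - 1 - (i + 1) = n - 1 - i := by omega
      rw [hidx, ← mul_assoc]
      exact term_id hp1 hb (e (n - 1 - i)) (he _) i
    have htail : b * (p ^ n * c ^ p) ≤
        p ^ ((p ^ (n + 1 + 1) - ((↑(n + 1) : ℝ) + 1) * p + (↑(n + 1) : ℝ)) / (p - 1) ^ 2) *
          b ^ ((p ^ (n + 1) - 1) / (p - 1)) * r 0 ^ (p ^ (n + 1)) := by
      rw [← mul_assoc]
      exact tail_le hp1 hb (r 0) (hr 0) n
    -- the i = 0 term of the new sum is e n
    have hzero : e (n + 1 - 1 - 0) ^ (p ^ 0) * b ^ ((p ^ 0 - 1) / (p - 1)) *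
        p ^ ((p ^ (0 + 1) - ((0:ℕ) + 1 : ℝ) * p + ((0:ℕ) : ℝ)) / (p - 1) ^ 2) = e n := by
      push_cast
      simp [Real.rpow_one]
    calc r (n + 1) ≤ e n + b * r n ^ p := hrn1
      _ ≤ e n + b * (∑ i ∈ Finset.range n, f i + c) ^ p := by
          have := mul_le_mul_of_nonneg_left h2 hb.le; linarith
      _ ≤ e n + b * (∑ i ∈ Finset.range n, p ^ (i + 1) * f i ^ p + p ^ n * c ^ p) := by
          have := mul_le_mul_of_nonneg_left h3 hb.le; linarith
      _ = e n + (∑ i ∈ Finset.range n, b * (p ^ (i + 1) * f i ^ p) + b * (p ^ n * c ^ p)) := by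
          rw [mul_add, Finset.mul_sum]
      _ ≤ e n + (∑ i ∈ Finset.range n,
            e (n + 1 - 1 - (i + 1)) ^ (p ^ (i + 1)) * b ^ ((p ^ (i + 1) - 1) / (p - 1)) *
              p ^ ((p ^ (i + 1 + 1) - ((↑(i + 1) : ℝ) + 1) * p + (↑(i + 1) : ℝ)) / (p - 1) ^ 2) +
            p ^ ((p ^ (n + 1 + 1) - ((↑(n + 1) : ℝ) + 1) * p + (↑(n + 1) : ℝ)) / (p - 1) ^ 2) *
              b ^ ((p ^ (n + 1) - 1) / (p - 1)) * r 0 ^ (p ^ (n + 1))) := by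
          refine add_le_add_right (add_le_add ?_ htail) (e n)
          exact Finset.sum_le_sum fun i hi => le_of_eq (hterm i hi)
      _ = (∑ i ∈ Finset.range (n + 1),
            e (n + 1 - 1 - i) ^ (p ^ i) * b ^ ((p ^ i - 1) / (p - 1)) *
              p ^ ((p ^ (i + 1) - ((i : ℝ) + 1) * p + i) / (p - 1) ^ 2)) +
          p ^ ((p ^ (n + 1 + 1) - ((↑(n + 1) : ℝ) + 1) * p + (↑(n + 1) : ℝ)) / (p - 1) ^ 2) *
            b ^ ((p ^ (n + 1) - 1) / (p - 1)) * r 0 ^ (p ^ (n + 1)) := by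
          rw [Finset.sum_range_succ']
          push_cast
          norm_num
          ring
      _ = _ := by push_cast; ring_nf
end
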